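/- arXiv:1212.2000 — 5 statements merged into one kernel-verified Lean document; each statement's English description precedes it below -/
import Mathlib

section
/- Let A be a nonempty compact subset of ℝ^q, let v : ℝ^q → ℝ be bounded below on A, let p ≥ 1 be an integer and let n > 0, and define u_n(a) = inf_{a' ∈ A} [ v(a') + n‖a − a'‖^{2p} ]. Then u_n is locally semiconcave: for every R > 0 there exists a constant C ≥ 0 such that the function a ↦ u_n(a) − C‖a‖² is concave on the closed ball { a ∈ ℝ^q : ‖a‖ ≤ R }. -/
open Filter Topology

lemma pow_sub_pow_le' (k : ℕ) (M x y : ℝ) (hy : 0 ≤ y) (hyx : y ≤ x) (hxM : x ≤ M) :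
    x ^ k - y ^ k ≤ (x - y) * (k * (1 + M) ^ (2 * k)) := by
  have hx0 : 0 ≤ x := hy.trans hyx
  have hM1 : (1:ℝ) ≤ 1 + M := by linarith [hx0.trans hxM]
  have hx1 : x ≤ 1 + M := by linarith
  have hy1 : y ≤ 1 + M := by linarith
  rw [← geom_sum₂_mul x y k]
  have hbound : (∑ i ∈ Finset.range k, x ^ i * y ^ (k - 1 - i)) ≤ k * (1 + M) ^ (2 * k) := by
    have h := Finset.sum_le_card_nsmul (Finset.range k) (fun i => x ^ i * y ^ (k - 1 - i)) ((1+M)^(2*k)) ?_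
    · simpa [Finset.card_range, nsmul_eq_mul] using h
    · intro i hi
      have h1 : x ^ i ≤ (1+M)^k :=
        (pow_le_pow_left₀ hx0 hx1 i).trans (pow_le_pow_right₀ hM1 (Finset.mem_range.1 hi).le)
      have h2 : y ^ (k-1-i) ≤ (1+M)^k :=
        (pow_le_pow_left₀ hy hy1 _).trans (pow_le_pow_right₀ hM1 (by omega))
      calc x ^ i * y ^ (k-1-i) ≤ (1+M)^k * (1+M)^k :=
            mul_le_mul h1 h2 (pow_nonneg hy _) (pow_nonneg (by linarith) _)
        _ = (1+M)^(2*k) := by rw [← pow_add]; ring_nf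
  have hxy : 0 ≤ x - y := sub_nonneg.2 hyx
  calc (∑ i ∈ Finset.range k, x ^ i * y ^ (k-1-i)) * (x - y)
      ≤ (k * (1+M)^(2*k)) * (x - y) := mul_le_mul_of_nonneg_right hbound hxy
    _ = (x - y) * (k * (1+M)^(2*k)) := mul_comm _ _

lemma scalar_key (p : ℕ) (M B a b s l m : ℝ) (hB : 0 ≤ B)
    (hb : 0 ≤ b) (hba : b ≤ a) (haM : a ≤ M)
    (hs : 0 ≤ s) (habs : (a - b)^2 ≤ B * s)
    (hl : 0 ≤ l) (hm : 0 ≤ m) (hlm : l + m = 1)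
    (hc : 0 ≤ l*a + m*b - l*m*s) :
    l * a^p + m * b^p ≤ (l*a + m*b - l*m*s)^p
      + (p*(1+M)^(2*p) + B*p^2*(1+M)^(3*p)) * (l*m*s) := by
  have hm' : m = 1 - l := by linarith
  subst hm'
  have ha0 : 0 ≤ a := hb.trans hba
  have hM0 : 0 ≤ M := ha0.trans haM
  have hM1 : (1:ℝ) ≤ 1 + M := by linarith
  set T : ℝ := l*a + (1-l)*b with hT
  have hbT : b ≤ T := by nlinarith
  have hTa : T ≤ a := by nlinarith
  have hTM : T ≤ M := hTa.trans haM
  have hT0 : 0 ≤ T := hb.trans hbT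
  set c : ℝ := T - l*(1-l)*s with hcdef
  have hcT : c ≤ T := by nlinarith [mul_nonneg (mul_nonneg hl hm) hs]
  -- term 2 : T^p - c^p
  have ht2 : T^p - c^p ≤ (l*(1-l)*s) * (p * (1+M)^(2*p)) := by
    have := pow_sub_pow_le' p M T c hc hcT hTM
    calc T^p - c^p ≤ (T - c) * (p * (1+M)^(2*p)) := this
      _ = (l*(1-l)*s) * (p * (1+M)^(2*p)) := by rw [hcdef]; ring
  -- gap term
  have hSa := geom_sum₂_mul a T p
  have hSb := geom_sum₂_mul b T p
  have hgapeq : l * a^p + (1-l) * b^p - T^p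
      = l*(1-l)*(a-b) * ((∑ i ∈ Finset.range p, a ^ i * T ^ (p - 1 - i))
        - (∑ i ∈ Finset.range p, b ^ i * T ^ (p - 1 - i))) := by
    linear_combination (-l) * hSa + (-(1-l)) * hSb
  have hSdiff : (∑ i ∈ Finset.range p, a ^ i * T ^ (p - 1 - i))
        - (∑ i ∈ Finset.range p, b ^ i * T ^ (p - 1 - i))
      ≤ (a - b) * (p^2 * (1+M)^(3*p)) := by
    rw [← Finset.sum_sub_distrib]
    have h := Finset.sum_le_card_nsmul (Finset.range p)
      (fun i => a ^ i * T ^ (p-1-i) - b ^ i * T ^ (p-1-i))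
      ((a-b) * (p * (1+M)^(3*p))) ?_
    · calc _ ≤ (Finset.range p).card • ((a-b) * (p * (1+M)^(3*p))) := h
        _ = (a - b) * (p^2 * (1+M)^(3*p)) := by
            rw [Finset.card_range, nsmul_eq_mul]; ring
    · intro i hi
      have hip : i ≤ p := (Finset.mem_range.1 hi).le
      have h1 : a^i - b^i ≤ (a-b) * (i * (1+M)^(2*i)) :=
        pow_sub_pow_le' i M a b hb hba haM
      have h1' : a^i - b^i ≤ (a-b) * (p * (1+M)^(2*p)) := by
        refine h1.trans (mul_le_mul_of_nonneg_left ?_ (by linarith))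
        have : ((i:ℝ)) ≤ p := by exact_mod_cast hip
        have hpow : (1+M)^(2*i) ≤ (1+M)^(2*p) := pow_le_pow_right₀ hM1 (by omega)
        have := mul_le_mul this hpow (pow_nonneg (by linarith) _) (by positivity)
        exact this
      have hTpow : T ^ (p-1-i) ≤ (1+M)^p :=
        (pow_le_pow_left₀ hT0 (by linarith) _).trans (pow_le_pow_right₀ hM1 (by omega))
      have hab0 : 0 ≤ a - b := by linarith
      calc a ^ i * T ^ (p-1-i) - b ^ i * T ^ (p-1-i)
          = (a^i - b^i) * T ^ (p-1-i) := by ring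
        _ ≤ ((a-b) * (p * (1+M)^(2*p))) * (1+M)^p := by
            refine mul_le_mul h1' hTpow (pow_nonneg hT0 _) (by positivity)
        _ = (a-b) * (p * (1+M)^(3*p)) := by
            rw [show 3*p = 2*p + p by ring, pow_add]; ring
  have hab0 : 0 ≤ a - b := by linarith
  have hll : 0 ≤ l*(1-l) := by nlinarith
  have hgap : l * a^p + (1-l) * b^p - T^p ≤ (l*(1-l)) * (B * s) * (p^2 * (1+M)^(3*p)) := by
    rw [hgapeq]
    have h2 : l*(1-l)*(a-b) * ((∑ i ∈ Finset.range p, a ^ i * T ^ (p - 1 - i))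
        - (∑ i ∈ Finset.range p, b ^ i * T ^ (p - 1 - i)))
        ≤ l*(1-l)*(a-b) * ((a - b) * (p^2 * (1+M)^(3*p))) :=
      mul_le_mul_of_nonneg_left hSdiff (by positivity)
    refine h2.trans ?_
    calc l*(1-l)*(a-b) * ((a - b) * (p^2 * (1+M)^(3*p)))
        = (l*(1-l)) * ((a-b)^2 * (p^2 * (1+M)^(3*p))) := by ring
      _ ≤ (l*(1-l)) * ((B*s) * (p^2 * (1+M)^(3*p))) := by
          exact mul_le_mul_of_nonneg_left (mul_le_mul_of_nonneg_right habs (by positivity)) hll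
      _ = (l*(1-l)) * (B * s) * (p^2 * (1+M)^(3*p)) := by ring
  linarith [ht2, hgap]

lemma norm_combo_sq {q : ℕ} (x y w : EuclideanSpace ℝ (Fin q)) (l m : ℝ) (hlm : l + m = 1) :
    ‖l • x + m • y - w‖^2 = l*‖x-w‖^2 + m*‖y-w‖^2 - l*m*‖x-y‖^2 := by
  have hm' : m = 1 - l := by linarith
  subst hm'
  have e : l • x + (1-l) • y - w = l • (x - w) + (1-l) • (y - w) := by module
  have e2 : x - y = (x - w) - (y - w) := by abel
  rw [e, e2]
  generalize (x - w) = u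
  generalize (y - w) = z
  rw [← real_inner_self_eq_norm_sq, ← real_inner_self_eq_norm_sq,
    ← real_inner_self_eq_norm_sq, ← real_inner_self_eq_norm_sq]
  simp only [inner_add_left, inner_add_right, inner_sub_left, inner_sub_right,
    real_inner_smul_left, real_inner_smul_right]
  rw [real_inner_comm z u]
  ring

set_option maxHeartbeats 1000000 in
/-- If `v` is bounded below on the nonempty compact set `A ⊆ ℝ^q`,
then the inf-convolution `uₙ(a) = inf_{a' ∈ A} [v(a') + n‖a − a'‖^(2p)]` (with `n > 0`)
is locally semiconcave: for every `R > 0` there is `C ≥ 0` such that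
`a ↦ uₙ(a) − C‖a‖²` is concave on the closed ball of radius `R`. -/
theorem stmt_5 (q p : ℕ) (hp : 1 ≤ p)
    (A : Set (EuclideanSpace ℝ (Fin q))) (hAc : IsCompact A) (hAne : A.Nonempty)
    (v : EuclideanSpace ℝ (Fin q) → ℝ) (hbdd : BddBelow (v '' A))
    (n : ℝ) (hn : 0 < n)
    (u : EuclideanSpace ℝ (Fin q) → ℝ)
    (hu : ∀ a, u a = sInf ((fun a' => v a' + n * ‖a - a'‖ ^ (2 * p)) '' A)) :
    ∀ R : ℝ, 0 < R → ∃ C : ℝ, 0 ≤ C ∧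
      ConcaveOn ℝ (Metric.closedBall (0 : EuclideanSpace ℝ (Fin q)) R)
        (fun a => u a - C * ‖a‖ ^ 2) := by
  intro R hR
  obtain ⟨r, hr⟩ := hAc.isBounded.subset_closedBall 0
  set K : ℝ := max r 0 with hKdef
  have hK : ∀ a' ∈ A, ‖a'‖ ≤ K := by
    intro a' ha'
    have := hr ha'
    rw [Metric.mem_closedBall, dist_zero_right] at this
    exact this.trans (le_max_left _ _)
  have hK0 : 0 ≤ K := le_max_right _ _
  set D : ℝ := R + K with hDdef
  have hD0 : 0 < D := by positivity
  set M : ℝ := D^2 with hMdef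
  set B : ℝ := 4*D^2 with hBdef
  have hB0 : 0 ≤ B := by positivity
  set L : ℝ := p*(1+M)^(2*p) + B*p^2*(1+M)^(3*p) with hLdef
  have hL0 : 0 ≤ L := by positivity
  refine ⟨n*L, by positivity, convex_closedBall 0 R, ?_⟩
  intro x hx y hy l m hl hm hlm
  simp only [smul_eq_mul]
  rw [hu, hu, hu]
  -- lower bound on v
  obtain ⟨m0, hm0⟩ := hbdd
  have hBdd : ∀ w : EuclideanSpace ℝ (Fin q),
      BddBelow ((fun a' => v a' + n * ‖w - a'‖ ^ (2 * p)) '' A) := by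
    intro w
    refine ⟨m0, ?_⟩
    rintro b ⟨a', ha', rfl⟩
    have h1 : m0 ≤ v a' := hm0 ⟨a', ha', rfl⟩
    have h2 : 0 ≤ n * ‖w - a'‖ ^ (2 * p) := by positivity
    dsimp only
    linarith
  have hNe : ∀ w : EuclideanSpace ℝ (Fin q),
      ((fun a' => v a' + n * ‖w - a'‖ ^ (2 * p)) '' A).Nonempty := fun w => hAne.image _
  have hxR : ‖x‖ ≤ R := by rwa [Metric.mem_closedBall, dist_zero_right] at hx
  have hyR : ‖y‖ ≤ R := by rwa [Metric.mem_closedBall, dist_zero_right] at hy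
  set s : ℝ := ‖x - y‖^2 with hsdef
  have hs0 : 0 ≤ s := sq_nonneg _
  have hnz : ‖l • x + m • y‖^2 = l*‖x‖^2 + m*‖y‖^2 - l*m*s := by
    have := norm_combo_sq x y 0 l m hlm
    simpa using this
  set Ix := sInf ((fun a' => v a' + n * ‖x - a'‖ ^ (2 * p)) '' A) with hIx
  set Iy := sInf ((fun a' => v a' + n * ‖y - a'‖ ^ (2 * p)) '' A) with hIy
  have hsuff : l * Ix + m * Iy - (n*L)*(l*m*s)
      ≤ sInf ((fun a' => v a' + n * ‖(l • x + m • y) - a'‖ ^ (2 * p)) '' A) := by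
    apply le_csInf (hNe _)
    rintro b ⟨a', ha', rfl⟩
    dsimp only
    have h1 : Ix ≤ v a' + n * ‖x - a'‖ ^ (2 * p) := csInf_le (hBdd x) ⟨a', ha', rfl⟩
    have h2 : Iy ≤ v a' + n * ‖y - a'‖ ^ (2 * p) := csInf_le (hBdd y) ⟨a', ha', rfl⟩
    set ta : ℝ := ‖x - a'‖^2 with htadef
    set tb : ℝ := ‖y - a'‖^2 with htbdef
    have hta0 : 0 ≤ ta := sq_nonneg _
    have htb0 : 0 ≤ tb := sq_nonneg _
    have hxa : ‖x - a'‖ ≤ D := by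
      have := norm_sub_le x a'
      have := hK a' ha'
      simp only [hDdef]; linarith
    have hya : ‖y - a'‖ ≤ D := by
      have := norm_sub_le y a'
      have := hK a' ha'
      simp only [hDdef]; linarith
    have htaM : ta ≤ M := by
      rw [htadef, hMdef]
      exact pow_le_pow_left₀ (norm_nonneg _) hxa 2
    have htbM : tb ≤ M := by
      rw [htbdef, hMdef]
      exact pow_le_pow_left₀ (norm_nonneg _) hya 2
    have hident : ‖(l • x + m • y) - a'‖^2 = l*ta + m*tb - l*m*s :=
      norm_combo_sq x y a' l m hlm
    have hc0 : 0 ≤ l*ta + m*tb - l*m*s := by rw [← hident]; positivity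
    have habs : (ta - tb)^2 ≤ B * s := by
      have hd : |‖x - a'‖ - ‖y - a'‖| ≤ ‖x - y‖ := by
        have := abs_norm_sub_norm_le (x - a') (y - a')
        have e : (x - a') - (y - a') = x - y := by abel
        rwa [e] at this
      have hd2 : (‖x - a'‖ - ‖y - a'‖)^2 ≤ ‖x - y‖^2 := by
        rw [← sq_abs]
        exact pow_le_pow_left₀ (abs_nonneg _) hd 2
      have hsum : ‖x - a'‖ + ‖y - a'‖ ≤ 2*D := by linarith
      have key : (ta - tb)^2 = (‖x - a'‖ - ‖y - a'‖)^2 * (‖x - a'‖ + ‖y - a'‖)^2 := by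
        rw [htadef, htbdef]; ring
      rw [key]
      calc (‖x - a'‖ - ‖y - a'‖)^2 * (‖x - a'‖ + ‖y - a'‖)^2
          ≤ ‖x - y‖^2 * (2*D)^2 := by
            refine mul_le_mul hd2 ?_ (sq_nonneg _) (sq_nonneg _)
            exact pow_le_pow_left₀ (by positivity) hsum 2
        _ = B * s := by rw [hBdef, hsdef]; ring
    -- scalar key, two cases
    have hkey : l * ta^p + m * tb^p ≤ (l*ta + m*tb - l*m*s)^p + L * (l*m*s) := by
      rcases le_total tb ta with hba | hba
      · exact scalar_key p M B ta tb s l m hB0 htb0 hba htaM hs0 habs hl hm hlm hc0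
      · have habs' : (tb - ta)^2 ≤ B * s := by nlinarith [habs]
        have hc0' : 0 ≤ m*tb + l*ta - m*l*s := by linarith [hc0]
        have h := scalar_key p M B tb ta s m l hB0 hta0 hba htbM hs0 habs' hm hl (by linarith) hc0'
        have e : m*tb + l*ta - m*l*s = l*ta + m*tb - l*m*s := by ring
        rw [e] at h
        have e2 : (↑p*(1+M)^(2*p) + B*↑p^2*(1+M)^(3*p)) * (m*l*s) = L*(l*m*s) := by
          rw [hLdef]; ring
        rw [e2] at h
        linarith
    have hpowx : ‖x - a'‖ ^ (2*p) = ta^p := by rw [pow_mul, htadef]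
    have hpowy : ‖y - a'‖ ^ (2*p) = tb^p := by rw [pow_mul, htbdef]
    have hpowz : ‖(l • x + m • y) - a'‖ ^ (2*p) = (l*ta + m*tb - l*m*s)^p := by
      rw [pow_mul, hident]
    rw [hpowx] at h1
    rw [hpowy] at h2
    rw [hpowz]
    have h1' : l * Ix ≤ l * (v a' + n * ta^p) := mul_le_mul_of_nonneg_left h1 hl
    have h2' : m * Iy ≤ m * (v a' + n * tb^p) := mul_le_mul_of_nonneg_left h2 hm
    have hn' : n * (l * ta^p + m * tb^p) ≤ n * ((l*ta + m*tb - l*m*s)^p + L * (l*m*s)) :=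
      mul_le_mul_of_nonneg_left hkey hn.le
    have hv : l * v a' + m * v a' = v a' := by linear_combination (v a') * hlm
    linarith [h1', h2', hn', hv]
  have goalrw : l * (Ix - n*L*‖x‖^2) + m * (Iy - n*L*‖y‖^2)
      ≤ sInf ((fun a' => v a' + n * ‖(l • x + m • y) - a'‖ ^ (2 * p)) '' A)
        - n*L*‖l • x + m • y‖^2 := by
    rw [hnz]
    linarith [hsuff]
  exact goalrw
end

section
/- Let O be a nonempty open connected subset of ℝ^q and let u : ℝ^q → ℝ be locally Lipschitz on O, i.e. every point of O has a neighborhood on which u is Lipschitz. Suppose that for Lebesgue-almost every point a of O, u is Fréchet differentiable at a with derivative equal to zero. Then u is constant on O. -/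
/-!
Near a point of `O` extend `u` from a small ball to a globally Lipschitz function `f`. For a
mollifier `φ`, integrating by parts (Rademacher's formula for Lipschitz functions) moves the
derivative of `φ ⋆ f` onto `f`, whose derivative vanishes a.e. on the ball; so `φ ⋆ f` is
constant on a slightly smaller ball, and letting the support of `φ` shrink shows that `f`, hence
`u`, is constant near the point. A locally constant function on a connected set is constant.
-/

open Filter Topology MeasureTheory Metric Function ContinuousLinearMap
open scoped Convolution

theorem lineDeriv_comp_sub_left {E F : Type*} [NormedAddCommGroup E] [NormedSpace ℝ E]
    [NormedAddCommGroup F] [NormedSpace ℝ F] (g : E → F) (x₀ x v : E) :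
    lineDeriv ℝ (fun t => g (x₀ - t)) x (-v) = lineDeriv ℝ g (x₀ - x) v := by
  simp only [lineDeriv, smul_neg, sub_add_eq_sub_sub, sub_neg_eq_add]

section

variable {E : Type*} [NormedAddCommGroup E] [NormedSpace ℝ E] [FiniteDimensional ℝ E]
  [MeasurableSpace E] [BorelSpace E] {μ : Measure E} [μ.IsAddHaarMeasure]
  {K : NNReal} {f g : E → ℝ}

theorem LipschitzWith.integral_mul_fderiv_sub_eq_zero (hf : LipschitzWith K f)
    (hg : HasCompactSupport g) (hg' : ContDiff ℝ 1 g) {x₀ : E}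
    (hae : ∀ᵐ x ∂μ, x₀ - x ∈ support g → HasFDerivAt f (0 : E →L[ℝ] ℝ) x) (v : E) :
    ∫ t, f t * fderiv ℝ g (x₀ - t) v ∂μ = 0 := by
  set g₀ : E → ℝ := fun t => g (x₀ - t)
  have hg₀ : HasCompactSupport g₀ := hg.comp_homeomorph (Homeomorph.subLeft x₀)
  obtain ⟨D, hD⟩ := ContDiff.lipschitzWith_of_hasCompactSupport hg₀
    (hg'.comp (contDiff_const.sub contDiff_id)) one_ne_zero
  have hderiv : ∀ t, fderiv ℝ g (x₀ - t) v = lineDeriv ℝ g₀ t (-v) := fun t => by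
    rw [lineDeriv_comp_sub_left,
      ((hg'.differentiable one_ne_zero) _).lineDeriv_eq_fderiv]
  have hvanish : ∀ᵐ t ∂μ, lineDeriv ℝ f t v * g₀ t = 0 := by
    filter_upwards [hae] with t ht
    by_cases hgt : g₀ t = 0
    · simp [hgt]
    · simp [((ht hgt).hasLineDerivAt v).lineDeriv]
  calc ∫ t, f t * fderiv ℝ g (x₀ - t) v ∂μ = ∫ t, lineDeriv ℝ g₀ t (-v) * f t ∂μ := by
        simp only [hderiv, mul_comm]
    _ = ∫ t, lineDeriv ℝ f t v * g₀ t ∂μ := (hf.integral_lineDeriv_mul_eq hD hg₀ v).symm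
    _ = 0 := integral_eq_zero_of_ae hvanish

theorem LipschitzWith.hasFDerivAt_convolution_eq_zero (hf : LipschitzWith K f)
    (hg : HasCompactSupport g) (hg' : ContDiff ℝ 1 g) {x₀ : E}
    (hae : ∀ᵐ x ∂μ, x₀ - x ∈ support g → HasFDerivAt f (0 : E →L[ℝ] ℝ) x) :
    HasFDerivAt (g ⋆[lsmul ℝ ℝ, μ] f) (0 : E →L[ℝ] ℝ) x₀ := by
  have hswap : g ⋆[lsmul ℝ ℝ, μ] f = f ⋆[lsmul ℝ ℝ, μ] g := by
    ext y
    rw [convolution_lsmul_swap, convolution_lsmul]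
    simp only [smul_eq_mul, mul_comm]
  rw [hswap]
  have hfi : LocallyIntegrable f μ := hf.continuous.locallyIntegrable
  refine (hg.hasFDerivAt_convolution_right (lsmul ℝ ℝ) hfi hg' x₀).congr_fderiv ?_
  ext v
  rw [convolution_precompR_apply _ hfi (hg.fderiv ℝ) (hg'.continuous_fderiv one_ne_zero),
    convolution_def]
  simp only [lsmul_apply, smul_eq_mul, zero_apply]
  exact hf.integral_mul_fderiv_sub_eq_zero hg hg' hae v

theorem LipschitzWith.convolution_bump_eq_of_ae_hasFDerivAt_zero (hf : LipschitzWith K f)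
    (φ : ContDiffBump (0 : E)) {x : E} {r : ℝ}
    (hae : ∀ᵐ y ∂μ, y ∈ ball x r → HasFDerivAt f (0 : E →L[ℝ] ℝ) y)
    {y : E} (hy : y ∈ ball x (r - φ.rOut)) :
    (φ.normed μ ⋆[lsmul ℝ ℝ, μ] f) y = (φ.normed μ ⋆[lsmul ℝ ℝ, μ] f) x := by
  have hderiv : ∀ z ∈ ball x (r - φ.rOut),
      HasFDerivAt (φ.normed μ ⋆[lsmul ℝ ℝ, μ] f) (0 : E →L[ℝ] ℝ) z := by
    intro z hz
    refine hf.hasFDerivAt_convolution_eq_zero φ.hasCompactSupport_normed φ.contDiff_normed ?_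
    filter_upwards [hae] with t ht hzt
    rw [φ.support_normed_eq, mem_ball_zero_iff, ← dist_eq_norm] at hzt
    refine ht (lt_of_le_of_lt (dist_triangle t z x) ?_)
    rw [dist_comm t z]
    linarith [mem_ball.1 hz]
  refine isOpen_ball.is_const_of_fderiv_eq_zero (convex_ball _ _).isPreconnected
    (fun z hz => (hderiv z hz).differentiableAt.differentiableWithinAt)
    (fun z hz => (hderiv z hz).fderiv) hy (mem_ball_self ?_)
  exact lt_of_le_of_lt dist_nonneg hy

theorem LipschitzWith.eqOn_ball_of_ae_hasFDerivAt_zero (hf : LipschitzWith K f) {x : E} {r : ℝ}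
    (hae : ∀ᵐ y ∂μ, y ∈ ball x r → HasFDerivAt f (0 : E →L[ℝ] ℝ) y) :
    Set.EqOn f (fun _ => f x) (ball x r) := by
  intro y hy
  let φ : ℕ → ContDiffBump (0 : E) := fun n =>
    ⟨1 / (n + 2), 1 / (n + 1), by positivity,
      one_div_lt_one_div_of_lt (by positivity) (by linarith)⟩
  have hφ : Tendsto (fun n => (φ n).rOut) atTop (𝓝 0) := tendsto_one_div_add_atTop_nhds_zero_nat
  have hsmall : ∀ᶠ n in atTop, y ∈ ball x (r - (φ n).rOut) := by
    filter_upwards [(tendsto_order.1 hφ).2 (r - dist y x) (by linarith [mem_ball.1 hy])]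
      with n hn
    rw [mem_ball]
    linarith
  exact tendsto_nhds_unique_of_eventuallyEq
    (ContDiffBump.convolution_tendsto_right_of_continuous hφ hf.continuous y)
    (ContDiffBump.convolution_tendsto_right_of_continuous hφ hf.continuous x)
    (hsmall.mono fun n hn => hf.convolution_bump_eq_of_ae_hasFDerivAt_zero (φ n) hae hn)

theorem LipschitzOnWith.eventually_eq_of_ae_hasFDerivAt_zero {u : E → ℝ} {V : Set E} {c : E}
    (hV : V ∈ 𝓝 c) (hu : LipschitzOnWith K u V)
    (hae : ∀ᵐ y ∂μ, y ∈ V → HasFDerivAt u (0 : E →L[ℝ] ℝ) y) :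
    ∀ᶠ y in 𝓝 c, u y = u c := by
  obtain ⟨ε, hε, hball⟩ := Metric.mem_nhds_iff.1 hV
  obtain ⟨f, hf, hfu⟩ := (hu.mono hball).extend_real
  have hae' : ∀ᵐ y ∂μ, y ∈ ball c ε → HasFDerivAt f (0 : E →L[ℝ] ℝ) y := by
    filter_upwards [hae] with y hy hyc
    refine (hy (hball hyc)).congr_of_eventuallyEq ?_
    filter_upwards [isOpen_ball.mem_nhds hyc] with z hz using (hfu hz).symm
  filter_upwards [ball_mem_nhds c hε] with y hy
  rw [hfu hy, hfu (mem_ball_self hε)]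
  exact hf.eqOn_ball_of_ae_hasFDerivAt_zero hae' hy

end

theorem IsPreconnected.apply_eq_of_eventually_eq {X Y : Type*} [TopologicalSpace X] {s : Set X}
    (hs : IsPreconnected s) {u : X → Y} (hu : ∀ x ∈ s, ∀ᶠ y in 𝓝 x, u y = u x)
    {a b : X} (ha : a ∈ s) (hb : b ∈ s) : u a = u b :=
  hs.induction₂ (fun x y => u x = u y)
    (fun x hx => nhdsWithin_le_nhds ((hu x hx).mono fun _ hy => hy.symm))
    (fun _ _ _ _ _ _ => Eq.trans) (fun _ _ _ _ => Eq.symm) ha hb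

/-- A function which is locally Lipschitz on a nonempty open connected
set `O ⊆ ℝ^q` and whose Fréchet derivative exists and vanishes at Lebesgue-almost every
point of `O` is constant on `O`. -/
theorem stmt_6 (q : ℕ) (O : Set (EuclideanSpace ℝ (Fin q)))
    (hO : IsOpen O) (hOconn : IsConnected O)
    (u : EuclideanSpace ℝ (Fin q) → ℝ)
    (hLip : ∀ a ∈ O, ∃ K : NNReal, ∃ V ∈ 𝓝 a, LipschitzOnWith K u V)
    (hderiv : ∀ᵐ a ∂(volume.restrict O),
      HasFDerivAt u (0 : EuclideanSpace ℝ (Fin q) →L[ℝ] ℝ) a) :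
    ∀ a ∈ O, ∀ b ∈ O, u a = u b := by
  have hae := (ae_restrict_iff' hO.measurableSet).1 hderiv
  have hloc : ∀ c ∈ O, ∀ᶠ y in 𝓝 c, u y = u c := fun c hc => by
    obtain ⟨K, V, hV, hu⟩ := hLip c hc
    refine (hu.mono Set.inter_subset_right).eventually_eq_of_ae_hasFDerivAt_zero (μ := volume)
      (inter_mem (hO.mem_nhds hc) hV) ?_
    filter_upwards [hae] with y hy hyOV using hy hyOV.1
  exact fun a ha b hb => hOconn.isPreconnected.apply_eq_of_eventually_eq hloc ha hb
end

section
/- Let O be a nonempty open connected subset of ℝ^q and let u : ℝ^q → ℝ be locally Lipschitz on O, i.e. every point of O has a neighborhood on which u is Lipschitz. Suppose that u is a viscosity supersolution of −|D_a u| = 0 on O in the following sense: for every a ∈ O and every continuously differentiable function φ : ℝ^q → ℝ such that u − φ attains a local minimum at a, one has Dφ(a) = 0. Then u is constant on O. -/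
open Filter Topology Metric

private lemma visc_ball_estimate {q : ℕ} (O : Set (EuclideanSpace ℝ (Fin q)))
    (u : EuclideanSpace ℝ (Fin q) → ℝ)
    (hvisc : ∀ a ∈ O, ∀ φ : EuclideanSpace ℝ (Fin q) → ℝ, ContDiff ℝ 1 φ →
      IsLocalMin (fun a' => u a' - φ a') a → fderiv ℝ φ a = 0)
    (y : EuclideanSpace ℝ (Fin q)) (r : ℝ) (hr : 0 < r)
    (hball : closedBall y r ⊆ O) (K : NNReal)
    (hK : LipschitzOnWith K u (closedBall y r))
    (lam : ℝ) (hlam : (K : ℝ) < lam * r) :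
    ∀ z ∈ closedBall y r, u y ≤ u z + lam * ‖z - y‖ ^ 2 := by
  set φ : EuclideanSpace ℝ (Fin q) → ℝ := fun z => -(lam * ‖z - y‖ ^ 2) with hφ
  have hφc : ContDiff ℝ 1 φ :=
    (contDiff_const.mul ((contDiff_id.sub contDiff_const).norm_sq ℝ)).neg
  have hgcont : ContinuousOn (fun z => u z - φ z) (closedBall y r) :=
    hK.continuousOn.sub hφc.continuous.continuousOn
  obtain ⟨z₀, hz₀mem, hz₀min⟩ := (isCompact_closedBall y r).exists_isMinOn
    (nonempty_closedBall.2 hr.le) hgcont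
  have hlam0 : 0 < lam := by
    nlinarith [K.coe_nonneg]
  rcases eq_or_ne z₀ y with rfl | hne
  · intro z hz
    have := hz₀min hz
    simp only [φ, sub_self, norm_zero] at this ⊢
    simp only [Set.mem_setOf_eq] at this
    nlinarith [this]
  · exfalso
    rcases eq_or_lt_of_le (mem_closedBall.1 hz₀mem) with hbd | hint
    · have h1 : u z₀ - φ z₀ ≤ u y - φ y := hz₀min (mem_closedBall_self hr.le)
      have hzy : ‖z₀ - y‖ = r := by rwa [← dist_eq_norm]
      have h2 : u y - u z₀ ≤ (K : ℝ) * r := by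
        have := hK.dist_le_mul y (mem_closedBall_self hr.le) z₀ hz₀mem
        have hd : dist y z₀ = r := by rw [dist_comm]; exact hbd.symm ▸ rfl
        calc u y - u z₀ ≤ |u y - u z₀| := le_abs_self _
          _ = dist (u y) (u z₀) := (Real.dist_eq _ _).symm
          _ ≤ K * dist y z₀ := this
          _ = K * r := by rw [hd]
      simp only [φ, sub_self, norm_zero, hzy] at h1
      nlinarith
    · have hmem : ball y r ∈ 𝓝 z₀ := (isOpen_ball).mem_nhds (mem_ball.2 hint)
      have hloc : IsLocalMin (fun a' => u a' - φ a') z₀ :=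
        hz₀min.isLocalMin (Filter.mem_of_superset hmem ball_subset_closedBall)
      have hz₀O : z₀ ∈ O := hball hz₀mem
      have hD := hvisc z₀ hz₀O φ hφc hloc
      have h1 : HasFDerivAt (fun z : EuclideanSpace ℝ (Fin q) => ‖z - y‖ ^ 2)
          ((2:ℕ) • ((innerSL ℝ) z₀ - (innerSL ℝ) y)) z₀ := by
        simpa using ((hasFDerivAt_id z₀).sub_const y).norm_sq
      have hder : HasFDerivAt φ (-(lam • ((2:ℕ) • ((innerSL ℝ) z₀ - (innerSL ℝ) y)))) z₀ :=
        (h1.const_mul lam).neg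
      have := hder.fderiv
      rw [hD] at this
      have happ := congrArg (fun L => L (z₀ - y)) this.symm
      simp only [ContinuousLinearMap.zero_apply, ContinuousLinearMap.neg_apply,
        ContinuousLinearMap.smul_apply, ContinuousLinearMap.sub_apply,
        innerSL_apply_apply, smul_eq_mul, nsmul_eq_mul, Nat.cast_ofNat] at happ
      rw [← inner_sub_left, real_inner_self_eq_norm_sq] at happ
      have hz0 : ‖z₀ - y‖ ^ 2 = 0 := by nlinarith
      exact hne (by rwa [pow_eq_zero_iff two_ne_zero, norm_eq_zero, sub_eq_zero] at hz0)

private lemma quad_bound_const {E : Type*} [NormedAddCommGroup E] [NormedSpace ℝ E]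
    (s : Set E) (hs : Convex ℝ s) (u : E → ℝ) (C : ℝ)
    (h : ∀ z ∈ s, ∀ w ∈ s, u z ≤ u w + C * ‖w - z‖ ^ 2) :
    ∀ z ∈ s, ∀ w ∈ s, u z = u w := by
  intro z hz w hw
  have key : ∀ n : ℕ, 1 ≤ n → |u w - u z| ≤ C * ‖w - z‖ ^ 2 / n := by
    intro n hn
    set p : ℕ → E := fun i => z + ((i : ℝ) / n) • (w - z) with hp
    have hn0 : (0:ℝ) < n := by exact_mod_cast hn
    have hpmem : ∀ i ≤ n, p i ∈ s := by
      intro i hi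
      have h0 : (0:ℝ) ≤ (i:ℝ)/n := by positivity
      have h1 : (i:ℝ)/n ≤ 1 := by
        rw [div_le_one hn0]; exact_mod_cast hi
      have := hs hz hw (sub_nonneg.2 h1) h0 (by ring)
      convert this using 1
      simp only [hp]
      module
    have hdiff : ∀ i, p (i + 1) - p i = ((1:ℝ)/n) • (w - z) := by
      intro i
      simp only [hp]
      push_cast
      module
    have hstep : ∀ i < n, |u (p (i+1)) - u (p i)| ≤ C * (‖w - z‖ / n) ^ 2 := by
      intro i hi
      have h1 := h (p i) (hpmem i hi.le) (p (i+1)) (hpmem (i+1) hi)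
      have h2 := h (p (i+1)) (hpmem (i+1) hi) (p i) (hpmem i hi.le)
      have e1 : ‖p (i+1) - p i‖ = ‖w - z‖ / n := by
        rw [hdiff i, norm_smul]
        simp [abs_of_nonneg (le_of_lt (by positivity : (0:ℝ) < 1/n)), div_eq_mul_inv,
          mul_comm]
      have e2 : ‖p i - p (i+1)‖ = ‖w - z‖ / n := by
        rw [← norm_neg, neg_sub]; exact e1
      rw [e1] at h1
      rw [e2] at h2
      rw [abs_sub_le_iff]
      constructor <;> [skip; skip] <;> nlinarith [sq_nonneg (‖w - z‖ / n)]
    have htel : u w - u z = ∑ i ∈ Finset.range n, (u (p (i+1)) - u (p i)) := by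
      rw [Finset.sum_range_sub (fun i => u (p i))]
      have hpn : p n = w := by
        simp only [hp, div_self hn0.ne']
        module
      have hp0 : p 0 = z := by simp [hp]
      rw [hpn, hp0]
    calc |u w - u z| = |∑ i ∈ Finset.range n, (u (p (i+1)) - u (p i))| := by rw [htel]
      _ ≤ ∑ i ∈ Finset.range n, |u (p (i+1)) - u (p i)| := Finset.abs_sum_le_sum_abs _ _
      _ ≤ ∑ _i ∈ Finset.range n, C * (‖w - z‖ / n) ^ 2 :=
          Finset.sum_le_sum (fun i hi => hstep i (Finset.mem_range.1 hi))
      _ = n * (C * (‖w - z‖ / n) ^ 2) := by rw [Finset.sum_const, Finset.card_range]; ring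
      _ = C * ‖w - z‖ ^ 2 / n * (n / n) := by field_simp
      _ = C * ‖w - z‖ ^ 2 / n := by rw [div_self hn0.ne', mul_one]
  have h0 : |u w - u z| ≤ 0 := by
    refine ge_of_tendsto (tendsto_const_div_atTop_nhds_zero_nat (C * ‖w - z‖ ^ 2)) ?_
    filter_upwards [eventually_ge_atTop 1] with n hn using key n hn
  have := abs_nonpos_iff.1 h0
  linarith [sub_eq_zero.1 this]

/-- A function which is locally Lipschitz on a nonempty open connected
set `O ⊆ ℝ^q` and is a viscosity supersolution of `−|D_a u| = 0` on `O` (i.e. `Dφ(a) = 0`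
for every `C¹` test function `φ` such that `u − φ` attains a local minimum at `a ∈ O`)
is constant on `O`. -/
theorem stmt_7 (q : ℕ) (O : Set (EuclideanSpace ℝ (Fin q)))
    (hO : IsOpen O) (hOconn : IsConnected O)
    (u : EuclideanSpace ℝ (Fin q) → ℝ)
    (hLip : ∀ a ∈ O, ∃ K : NNReal, ∃ V ∈ 𝓝 a, LipschitzOnWith K u V)
    (hvisc : ∀ a ∈ O, ∀ φ : EuclideanSpace ℝ (Fin q) → ℝ, ContDiff ℝ 1 φ →
      IsLocalMin (fun a' => u a' - φ a') a → fderiv ℝ φ a = 0) :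
    ∀ a ∈ O, ∀ b ∈ O, u a = u b := by
  -- Step 1: u is locally constant on O
  have hloc : ∀ y ∈ O, ∃ ε > 0, ball y ε ⊆ O ∧ ∀ z ∈ ball y ε, u z = u y := by
    intro y hy
    obtain ⟨K, V, hV, hKV⟩ := hLip y hy
    have hVO : V ∩ O ∈ 𝓝 y := Filter.inter_mem hV (hO.mem_nhds hy)
    obtain ⟨r, hr, hrsub⟩ := Metric.nhds_basis_closedBall.mem_iff.1 hVO
    have hrO : closedBall y r ⊆ O := hrsub.trans Set.inter_subset_right
    have hKr : LipschitzOnWith K u (closedBall y r) :=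
      hKV.mono (hrsub.trans Set.inter_subset_left)
    set lam : ℝ := (2 * (K : ℝ) + 1) / r with hlamdef
    refine ⟨r / 4, by positivity, (ball_subset_closedBall.trans
      (closedBall_subset_closedBall (by linarith))).trans hrO, ?_⟩
    have hquad : ∀ z ∈ ball y (r / 4), ∀ w ∈ ball y (r / 4),
        u z ≤ u w + lam * ‖w - z‖ ^ 2 := by
      intro z hz w hw
      have hsub : closedBall z (r / 2) ⊆ closedBall y r := by
        intro x hx
        have h1 : dist x z ≤ r / 2 := mem_closedBall.1 hx
        have h2 : dist z y < r / 4 := mem_ball.1 hz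
        exact mem_closedBall.2 (le_trans (dist_triangle x z y) (by linarith))
      have hwz : w ∈ closedBall z (r / 2) := by
        have h1 : dist w y < r / 4 := mem_ball.1 hw
        have h2 : dist z y < r / 4 := mem_ball.1 hz
        exact mem_closedBall.2 (le_trans (dist_triangle w y z) (by rw [dist_comm z y] at h2; linarith))
      have hlamr : (K : ℝ) < lam * (r / 2) := by
        rw [hlamdef]
        rw [div_mul_eq_mul_div, mul_comm]
        rw [lt_div_iff₀ hr]
        nlinarith [K.coe_nonneg]
      exact visc_ball_estimate O u hvisc z (r / 2) (by positivity)
        (hsub.trans hrO) K (hKr.mono hsub) lam hlamr w hwz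
    exact fun z hz => quad_bound_const (ball y (r / 4)) (convex_ball y (r / 4)) u lam hquad
      z hz y (mem_ball_self (by positivity))
  -- Step 2: connectedness argument
  intro a ha b hb
  choose! ε hεpos hεsub hεconst using hloc
  set U : Set (EuclideanSpace ℝ (Fin q)) :=
    ⋃ y ∈ {y | y ∈ O ∧ u y = u a}, ball y (ε y) with hU
  set W : Set (EuclideanSpace ℝ (Fin q)) :=
    ⋃ y ∈ {y | y ∈ O ∧ u y ≠ u a}, ball y (ε y) with hW
  have hUopen : IsOpen U := isOpen_biUnion fun _ _ => isOpen_ball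
  have hWopen : IsOpen W := isOpen_biUnion fun _ _ => isOpen_ball
  have hdisj : Disjoint U W := by
    rw [Set.disjoint_left]
    rintro x hxU hxW
    obtain ⟨y, ⟨hyO, hyu⟩, hxy⟩ := Set.mem_iUnion₂.1 hxU
    obtain ⟨y', ⟨hy'O, hy'u⟩, hxy'⟩ := Set.mem_iUnion₂.1 hxW
    have e1 : u x = u y := hεconst y hyO x hxy
    have e2 : u x = u y' := hεconst y' hy'O x hxy'
    exact hy'u (by rw [← e2, e1, hyu])
  have hcover : O ⊆ U ∪ W := by
    intro x hx
    by_cases hux : u x = u a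
    · exact Or.inl (Set.mem_biUnion ⟨hx, hux⟩ (mem_ball_self (hεpos x hx)))
    · exact Or.inr (Set.mem_biUnion ⟨hx, hux⟩ (mem_ball_self (hεpos x hx)))
  have hOU : O ⊆ U := hOconn.isPreconnected.subset_left_of_subset_union hUopen hWopen
    hdisj hcover ⟨a, ha, Set.mem_biUnion ⟨ha, rfl⟩ (mem_ball_self (hεpos a ha))⟩
  obtain ⟨y, ⟨hyO, hyu⟩, hby⟩ := Set.mem_iUnion₂.1 (hOU hb)
  rw [← hyu, ← hεconst y hyO b hby]
end

section
/- Let X be a metric space and let (f_n) be a nondecreasing sequence of continuous functions f_n : X → ℝ converging pointwise to a function f : X → ℝ that is locally bounded above. Denote by f*(x) = limsup_{x' → x} f(x') the upper semicontinuous envelope of f. Then for every x ∈ X: (i) for every sequence (x_k) converging to x and every sequence of indices n_k → ∞, limsup_{k → ∞} f_{n_k}(x_k) ≤ f*(x); (ii) there exist a sequence (x_k) converging to x and indices n_k → ∞ such that f_{n_k}(x_k) → f*(x). Consequently the relaxed upper limit limsup_{n → ∞, x' → x} f_n(x') equals f*(x). -/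
open Filter Topology

/-- Let `fₙ` be a nondecreasing sequence of continuous functions on a
metric space converging pointwise to a locally bounded-above function `f`, and let
`f*(x) = limsup_{x' → x} f(x')` be the upper semicontinuous envelope of `f`. Then for
every `x`: (i) `limsup_k f_{n_k}(x_k) ≤ f*(x)` (limsup in the extended reals) for all
sequences `x_k → x`, `n_k → ∞`; (ii) there exist such sequences with
`f_{n_k}(x_k) → f*(x)`; hence the relaxed upper limit of `(fₙ)` at `x` equals `f*(x)`. -/
theorem stmt_9 {X : Type*} [MetricSpace X] (f : ℕ → X → ℝ)
    (hcont : ∀ n, Continuous (f n))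
    (hmono : ∀ n x, f n x ≤ f (n + 1) x)
    (g : X → ℝ) (hlim : ∀ x, Tendsto (fun n => f n x) atTop (𝓝 (g x)))
    (hbdd : ∀ x : X, ∃ V ∈ 𝓝 x, BddAbove (g '' V))
    (gstar : X → ℝ) (hgstar : ∀ x, gstar x = limsup g (𝓝 x)) :
    (∀ x : X, ∀ xk : ℕ → X, ∀ nk : ℕ → ℕ,
      Tendsto xk atTop (𝓝 x) → Tendsto nk atTop atTop →
      limsup (fun k => ((f (nk k) (xk k) : ℝ) : EReal)) atTop ≤ (gstar x : EReal)) ∧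
    (∀ x : X, ∃ xk : ℕ → X, ∃ nk : ℕ → ℕ,
      Tendsto xk atTop (𝓝 x) ∧ Tendsto nk atTop atTop ∧
      Tendsto (fun k => f (nk k) (xk k)) atTop (𝓝 (gstar x))) := by
  have hmono' : ∀ x, Monotone fun n => f n x :=
    fun x => monotone_nat_of_le_succ fun n => hmono n x
  have hle : ∀ n x, f n x ≤ g x := fun n x => (hmono' x).ge_of_tendsto (hlim x) n
  have hbA : ∀ x : X, IsBoundedUnder (· ≤ ·) (𝓝 x) g := by
    intro x
    obtain ⟨V, hV, M, hM⟩ := hbdd x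
    exact ⟨M, eventually_map.2 (Filter.mem_of_superset hV fun y hy => hM ⟨y, hy, rfl⟩)⟩
  have hbB : ∀ x : X, IsBoundedUnder (· ≥ ·) (𝓝 x) g := by
    intro x
    refine ⟨f 0 x - 1, eventually_map.2 ?_⟩
    have h1 : ∀ᶠ y in 𝓝 x, f 0 x - 1 < f 0 y :=
      (hcont 0).continuousAt.eventually (eventually_gt_nhds (by linarith))
    exact h1.mono fun y hy => le_trans hy.le (hle 0 y)
  constructor
  · intro x xk nk hxk hnkT
    have key : ∀ ε : ℝ, 0 < ε →
        limsup (fun k => ((f (nk k) (xk k) : ℝ) : EReal)) atTop ≤ ((gstar x + ε : ℝ) : EReal) := by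
      intro ε hε
      have h1 : limsup g (𝓝 x) < gstar x + ε := by rw [← hgstar]; linarith
      have h2 : ∀ᶠ y in 𝓝 x, g y < gstar x + ε := eventually_lt_of_limsup_lt h1 (hbA x)
      have h3 : ∀ᶠ k in atTop, g (xk k) < gstar x + ε := hxk.eventually h2
      refine limsup_le_of_le (by isBoundedDefault) (h3.mono fun k hk => ?_)
      exact_mod_cast le_trans (hle (nk k) (xk k)) hk.le
    refine le_of_forall_gt_imp_ge_of_dense fun c hc => ?_
    induction c using EReal.rec with
    | bot => exact absurd hc (not_lt.2 bot_le)
    | coe r =>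
        have hr : gstar x < r := by exact_mod_cast hc
        have := key (r - gstar x) (by linarith)
        simpa using this
    | top => exact le_top
  · intro x
    set L := gstar x with hL
    have hcob : IsCoboundedUnder (· ≤ ·) (𝓝 x) g := (hbB x).isCoboundedUnder_le
    have H1 : ∀ j : ℕ, ∃ y : X,
        dist y x < 1 / (j + 1) ∧ L - 1 / (j + 1) < g y ∧ g y < L + 1 / (j + 1) := by
      intro j
      have hpos : (0 : ℝ) < 1 / (j + 1) := by positivity
      have hfreq : ∃ᶠ y in 𝓝 x, L - 1 / (j + 1) < g y :=
        frequently_lt_of_lt_limsup hcob (by rw [← hgstar]; linarith)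
      have hev1 : ∀ᶠ y in 𝓝 x, g y < L + 1 / (j + 1) :=
        eventually_lt_of_limsup_lt (by rw [← hgstar]; linarith) (hbA x)
      have hev2 : ∀ᶠ y in 𝓝 x, dist y x < 1 / (j + 1) :=
        Metric.ball_mem_nhds x hpos
      obtain ⟨y, h1, h2, h3⟩ := (hfreq.and_eventually (hev1.and hev2)).exists
      exact ⟨y, h3, h1, h2⟩
    choose y hy1 hy2 hy3 using H1
    have H2 : ∀ j : ℕ, ∃ n : ℕ, j ≤ n ∧ g (y j) - 1 / (j + 1) < f n (y j) := by
      intro j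
      have hpos : (0 : ℝ) < 1 / (j + 1) := by positivity
      have h1 : ∀ᶠ n in atTop, g (y j) - 1 / (j + 1) < f n (y j) :=
        (hlim (y j)).eventually (eventually_gt_nhds (by linarith))
      exact ((eventually_ge_atTop j).and h1).exists
    choose nk hnk1 hnk2 using H2
    have hone : Tendsto (fun j : ℕ => (1 : ℝ) / (j + 1)) atTop (𝓝 0) :=
      tendsto_one_div_add_atTop_nhds_zero_nat
    refine ⟨y, nk, ?_, tendsto_atTop_mono hnk1 tendsto_id, ?_⟩
    · rw [tendsto_iff_dist_tendsto_zero]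
      exact squeeze_zero (fun j => dist_nonneg) (fun j => (hy1 j).le) hone
    · have hlow : Tendsto (fun j : ℕ => L - 1 / (j + 1) - 1 / (j + 1)) atTop (𝓝 L) := by
        have h0 : Tendsto (fun _ : ℕ => L) atTop (𝓝 L) := tendsto_const_nhds
        simpa using (h0.sub hone).sub hone
      have hhigh : Tendsto (fun j : ℕ => L + 1 / (j + 1)) atTop (𝓝 L) := by
        have h0 : Tendsto (fun _ : ℕ => L) atTop (𝓝 L) := tendsto_const_nhds
        simpa using h0.add hone
      refine tendsto_of_tendsto_of_tendsto_of_le_of_le hlow hhigh ?_ ?_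
      · intro j
        have := hnk2 j
        have := hy2 j
        dsimp only
        linarith
      · intro j
        exact le_trans (hle (nk j) (y j)) (hy3 j).le
end

section
/- Let A ⊆ ℝ^q be a nonempty compact set equal to the closure of its interior. Let λ be a finite Borel measure on ℝ^q such that λ(U ∩ int A) > 0 for every open set U ⊆ ℝ^q with U ∩ int A ≠ ∅. Let φ : ℝ^q → ℝ be continuous and let a ∈ A satisfy ∫_A max(φ(a') − φ(a), 0) dλ(a') = 0. Then φ(a') ≤ φ(a) for every a' ∈ A, i.e. φ(a) = max_{A} φ. If in addition a belongs to the interior of A and φ is Fréchet differentiable at a, then Dφ(a) = 0. -/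
open Filter Topology MeasureTheory

section

variable {X : Type*} [TopologicalSpace X] [MeasurableSpace X] {μ : Measure X} {A U : Set X}

theorem inter_eq_empty_of_measure_inter_eq_zero (hAcl : A ⊆ closure (interior A))
    (hμ : ∀ U : Set X, IsOpen U → (U ∩ interior A).Nonempty → 0 < μ (U ∩ interior A))
    (hU : IsOpen U) (h0 : μ (U ∩ A) = 0) : U ∩ A = ∅ := by
  by_contra hne
  obtain ⟨x, hxU, hxA⟩ := Set.nonempty_iff_ne_empty.mpr hne
  have hmeet : (U ∩ interior A).Nonempty := mem_closure_iff.mp (hAcl hxA) U hU hxU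
  have hle : μ (U ∩ interior A) ≤ μ (U ∩ A) :=
    measure_mono (Set.inter_subset_inter_right U interior_subset)
  exact (hμ U hU hmeet).ne' (le_antisymm (h0 ▸ hle) zero_le)

theorem le_of_setIntegral_max_sub_eq_zero [OpensMeasurableSpace X] {f : X → ℝ} {c : ℝ}
    (hAcl : A ⊆ closure (interior A))
    (hμ : ∀ U : Set X, IsOpen U → (U ∩ interior A).Nonempty → 0 < μ (U ∩ interior A))
    (hf : Continuous f) (hfi : IntegrableOn (fun x ↦ max (f x - c) 0) A μ)
    (h : ∫ x in A, max (f x - c) 0 ∂μ = 0) : ∀ x ∈ A, f x ≤ c := by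
  have hae : (fun x ↦ max (f x - c) 0) =ᵐ[μ.restrict A] 0 :=
    (integral_eq_zero_iff_of_nonneg (fun _ ↦ le_max_right _ _) hfi).mp h
  have hU : IsOpen {x | c < f x} := isOpen_lt continuous_const hf
  have hnull : μ ({x | c < f x} ∩ A) = 0 := by
    have hle : ∀ᵐ x ∂μ.restrict A, ¬ c < f x :=
      hae.mono fun x hx ↦ by simpa [sub_nonpos] using hx
    rw [← Measure.restrict_apply hU.measurableSet]
    simpa using ae_iff.mp hle
  intro x hxA
  by_contra hlt
  have hempty := inter_eq_empty_of_measure_inter_eq_zero hAcl hμ hU hnull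
  exact hempty.subset ⟨not_le.mp hlt, hxA⟩

end

theorem stmt_13_general (q : ℕ) (A : Set (EuclideanSpace ℝ (Fin q)))
    (hAc : IsCompact A) (hAcl : A = closure (interior A))
    (μ : Measure (EuclideanSpace ℝ (Fin q))) [IsFiniteMeasure μ]
    (hμ : ∀ U : Set (EuclideanSpace ℝ (Fin q)), IsOpen U →
      (U ∩ interior A).Nonempty → 0 < μ (U ∩ interior A))
    (φ : EuclideanSpace ℝ (Fin q) → ℝ) (hφ : Continuous φ)
    (a : EuclideanSpace ℝ (Fin q))
    (hint : ∫ a' in A, max (φ a' - φ a) 0 ∂μ = 0) :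
    (∀ a' ∈ A, φ a' ≤ φ a) ∧
    (a ∈ interior A → DifferentiableAt ℝ φ a → fderiv ℝ φ a = 0) := by
  have hfi : IntegrableOn (fun x ↦ max (φ x - φ a) 0) A μ :=
    ((hφ.sub continuous_const).max continuous_const).continuousOn.integrableOn_compact hAc
  have hmax : IsMaxOn φ A a :=
    le_of_setIntegral_max_sub_eq_zero hAcl.subset hμ hφ hfi hint
  exact ⟨hmax, fun hia _ ↦ (hmax.isLocalMax (mem_interior_iff_mem_nhds.mp hia)).fderiv_eq_zero⟩

/-- Let `A ⊆ ℝ^q` be a nonempty compact set equal to the closure of its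
interior and `λ` a finite Borel measure charging every nonempty open subset of `int A`.
If `φ` is continuous, `a ∈ A` and `∫_A (φ(a') − φ(a))⁺ dλ(a') = 0`, then `φ(a) = max_A φ`;
and if moreover `a ∈ int A` and `φ` is differentiable at `a`, then `Dφ(a) = 0`. -/
theorem stmt_13 (q : ℕ) (A : Set (EuclideanSpace ℝ (Fin q)))
    (hAc : IsCompact A) (hAne : A.Nonempty) (hAcl : A = closure (interior A))
    (μ : Measure (EuclideanSpace ℝ (Fin q))) [IsFiniteMeasure μ]
    (hμ : ∀ U : Set (EuclideanSpace ℝ (Fin q)), IsOpen U →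
      (U ∩ interior A).Nonempty → 0 < μ (U ∩ interior A))
    (φ : EuclideanSpace ℝ (Fin q) → ℝ) (hφ : Continuous φ)
    (a : EuclideanSpace ℝ (Fin q)) (ha : a ∈ A)
    (hint : ∫ a' in A, max (φ a' - φ a) 0 ∂μ = 0) :
    (∀ a' ∈ A, φ a' ≤ φ a) ∧
    (a ∈ interior A → DifferentiableAt ℝ φ a → fderiv ℝ φ a = 0) :=
  stmt_13_general q A hAc hAcl μ hμ φ hφ a hint
end
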